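/- arXiv:1204.4547 — 2 statements merged into one kernel-verified Lean document; each statement's English description precedes it below -/
import Mathlib

section
/- Let n ≥ 3 and let I be a nonempty proper subset of [n] that is nested, and let S ⊆ {1,2,3,4} be the set of indices i for which δ_i is a proper diagonal. Then S is never equal to any of the following sets: ∅, {2}, {3}, {4}, {1,2}, {1,3}, {2,4}, {3,4}. -/
open Finset

attribute [local instance] Classical.propDecidable

namespace AssocPaper

/-- `x` and `y` are consecutive elements of the finite set `S`. -/
def ConsecIn (S : Finset ℕ) (x y : ℕ) : Prop :=
  x ∈ S ∧ y ∈ S ∧ x < y ∧ ∀ z ∈ S, ¬ (x < z ∧ z < y)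

/-- `D̄ = D ∪ {0, n+1}`. -/
def Dbar (n : ℕ) (D : Finset ℕ) : Finset ℕ := insert 0 (insert (n + 1) D)

/-- The boundary edges of the `c`-labeled `(n+2)`-gon, given by endpoints `x < y`:
pairs of consecutive elements of `D̄`; if `U ≠ ∅` also `{0, min U}`, `{max U, n+1}` and
pairs of consecutive elements of `U`; if `U = ∅` also `{0, n+1}`. -/
def IsBoundary (n : ℕ) (D U : Finset ℕ) (x y : ℕ) : Prop :=
  ConsecIn (Dbar n D) x y
    ∨ (U.Nonempty ∧
        ((x = 0 ∧ y ∈ U ∧ ∀ u ∈ U, y ≤ u)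
          ∨ (y = n + 1 ∧ x ∈ U ∧ ∀ u ∈ U, u ≤ x)
          ∨ ConsecIn U x y))
    ∨ (U = ∅ ∧ x = 0 ∧ y = n + 1)

/-- `{x, y}` (with `x < y ≤ n+1`) is a proper diagonal: a diagonal of the
`(n+2)`-gon which is not a boundary edge. -/
def IsProper (n : ℕ) (D U : Finset ℕ) (x y : ℕ) : Prop :=
  x < y ∧ y ≤ n + 1 ∧ ¬ IsBoundary n D U x y

/-- The set `R_δ` for a proper diagonal `δ = {x,y}` with `x < y`. -/
noncomputable def Rdiag (n : ℕ) (D U : Finset ℕ) (x y : ℕ) : Finset ℕ :=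
  if x ∈ U then
    (if y ∈ U then (D ∪ U.filter fun u => u ≤ x) ∪ U.filter fun u => y ≤ u
     else D.filter (fun d => d < y) ∪ U.filter fun u => u ≤ x)
  else
    (if y ∈ U then D.filter (fun d => x < d) ∪ U.filter fun u => y ≤ u
     else D.filter fun d => x < d ∧ d < y)

/-- The extension of `R` to non-proper and degenerate diagonals `δ = {x,y}`, `x ≤ y`:
`R_δ = [n]` if `U = ∅` and `δ = {0,n+1}`; for other non-proper or degenerate `δ`,
`R_δ = ∅` if `x,y ∈ D̄` and `R_δ = [n]` otherwise. -/
noncomputable def Rext (n : ℕ) (D U : Finset ℕ) (x y : ℕ) : Finset ℕ :=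
  if IsProper n D U x y then Rdiag n D U x y
  else if U = ∅ ∧ x = 0 ∧ y = n + 1 then Finset.Icc 1 n
  else if x ∈ U ∨ y ∈ U then Finset.Icc 1 n
  else ∅

/-- The extension of the right-hand sides `z_{R_δ}` to non-proper and degenerate
diagonals, given the values `w` on proper diagonals and the value `zn = z_{[n]}`. -/
noncomputable def zext (n : ℕ) (D U : Finset ℕ) (w : ℕ × ℕ → ℝ) (zn : ℝ) (x y : ℕ) : ℝ :=
  if IsProper n D U x y then w (x, y)
  else if U = ∅ ∧ x = 0 ∧ y = n + 1 then zn
  else if x ∈ U ∨ y ∈ U then zn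
  else 0

/-- `a(I)`: the largest element of `D ∪ {0}` smaller than `min I`. -/
noncomputable def aI (D I : Finset ℕ) : ℕ :=
  ((insert 0 D).filter fun e => ∀ i ∈ I, e < i).sup id

/-- `b(I)`: the smallest element of `D ∪ {n+1}` larger than `max I`. -/
noncomputable def bI (n : ℕ) (D I : Finset ℕ) : ℕ :=
  sInf {e : ℕ | e ∈ insert (n + 1) D ∧ ∀ i ∈ I, i < e}

/-- The minimum element `γ` of `I` (junk value for `I = ∅`). -/
noncomputable def minEl (I : Finset ℕ) : ℕ := sInf {i : ℕ | i ∈ I}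

/-- The maximum element `Γ` of `I` (junk value `0` for `I = ∅`). -/
noncomputable def maxEl (I : Finset ℕ) : ℕ := I.sup id

/-- A nonempty `I ⊆ [n]` is nested if every `d ∈ D` with `a(I) < d < b(I)` lies in `I`. -/
def IsNested (n : ℕ) (D I : Finset ℕ) : Prop :=
  I.Nonempty ∧ I ⊆ Finset.Icc 1 n ∧
    ∀ d ∈ D, aI D I < d → d < bI n D I → d ∈ I

/-- The nested components of `I`: the inclusion-maximal nested subsets of `I`. -/
noncomputable def nestedComponents (n : ℕ) (D I : Finset ℕ) : Finset (Finset ℕ) :=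
  I.powerset.filter fun J =>
    IsNested n D J ∧ ∀ K ∈ I.powerset, IsNested n D K → J ⊆ K → J = K

/-- `v(I)`: the number of nested components of `I`. -/
noncomputable def vI (n : ℕ) (D I : Finset ℕ) : ℕ := (nestedComponents n D I).card

/-- `x` is the last element of one of the up intervals of `J`
(an element of `J ∩ U` whose successor in `U`, if any, is not in `J`). -/
def IsRunEnd (U J : Finset ℕ) (x : ℕ) : Prop :=
  x ∈ J ∧ x ∈ U ∧ ∀ y, ConsecIn U x y → y ∉ J

/-- `y` is the first element of one of the up intervals of `J`
(an element of `J ∩ U` whose predecessor in `U`, if any, is not in `J`). -/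
def IsRunStart (U J : Finset ℕ) (y : ℕ) : Prop :=
  y ∈ J ∧ y ∈ U ∧ ∀ x, ConsecIn U x y → x ∉ J

/-- `{x,y}` is one of the diagonals `δ_1(J), …, δ_{w+1}(J)` associated to a nested
set `J` with `a = a(J)`, `b = b(J)` and up intervals `[α_1,β_1]_U, …, [α_w,β_w]_U`,
namely `{a,α_1}, {β_1,α_2}, …, {β_w,b}` (and `{a,b}` when `w = 0`). -/
def AssocDiag (n : ℕ) (D U J : Finset ℕ) (x y : ℕ) : Prop :=
  x < y ∧ (x = aI D J ∨ IsRunEnd U J x) ∧ (y = bI n D J ∨ IsRunStart U J y) ∧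
    ∀ u ∈ J ∩ U, ¬ (x < u ∧ u < y)

/-- `W(J)`: the proper diagonals among the diagonals associated to the nested set `J`. -/
noncomputable def WJ (n : ℕ) (D U J : Finset ℕ) : Finset (ℕ × ℕ) :=
  (Finset.range (n + 2) ×ˢ Finset.range (n + 2)).filter fun p =>
    AssocDiag n D U J p.1 p.2 ∧ IsProper n D U p.1 p.2

/-- The tight value `z^c_I = ∑_i ( ∑_{j ∈ W(J_i)} w_{δ_j(J_i)} − (|W(J_i)|−1)·z_{[n]} )`,
the sum running over the nested components `J_i` of `I` (so `z^c_∅ = 0`). -/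
noncomputable def zc (n : ℕ) (D U : Finset ℕ) (w : ℕ × ℕ → ℝ) (zn : ℝ) (I : Finset ℕ) : ℝ :=
  ∑ J ∈ nestedComponents n D I,
    ((∑ p ∈ WJ n D U J, w p) - (((WJ n D U J).card : ℝ) - 1) * zn)

/-- The Minkowski coefficient `y_I = ∑_{J ⊆ I} (−1)^{|I∖J|} z^c_J`. -/
noncomputable def yI (n : ℕ) (D U : Finset ℕ) (w : ℕ × ℕ → ℝ) (zn : ℝ) (I : Finset ℕ) : ℝ :=
  ∑ J ∈ I.powerset, (-1 : ℝ) ^ (I \ J).card * zc n D U w zn J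

/-- The associahedron right-hand sides `w_δ = |R_δ|·(|R_δ|+1)/2`. -/
noncomputable def wAs (n : ℕ) (D U : Finset ℕ) (p : ℕ × ℕ) : ℝ :=
  (((Rdiag n D U p.1 p.2).card : ℝ) * (((Rdiag n D U p.1 p.2).card : ℝ) + 1)) / 2

/-- The associahedron value `z_{[n]} = n(n+1)/2`. -/
noncomputable def znAs (n : ℕ) : ℝ := ((n : ℝ) * ((n : ℝ) + 1)) / 2


/-! Since `a(I) < γ ≤ Γ < b(I)` with `a(I), b(I) ∈ D̄`, which of the `δ_i` are boundary edges
depends only on whether `γ` and `Γ` lie in `D` or in `U`. If both lie in `D`, then `δ_1` is proper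
(for `U = ∅`, nestedness would force `I = [n]` if `δ_1 = {0, n+1}`), and `δ_2`, `δ_3` are both
proper when `γ < Γ` and both edges between consecutive elements of `D̄` when `γ = Γ`. If exactly one
of them lies in `U`, then `δ_1` and `δ_4` are proper. If both lie in `U`, then `δ_2` and `δ_3` are
proper, as `1, n ∈ D` give `1 ≤ a(I)` and `b(I) ≤ n`. None of the excluded sets fits any of these
three patterns. -/

section Extremes

variable {n : ℕ} {D I : Finset ℕ}

lemma minEl_mem (h : I.Nonempty) : minEl I ∈ I := Nat.sInf_mem h

lemma minEl_le {i : ℕ} (hi : i ∈ I) : minEl I ≤ i := Nat.sInf_le hi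

lemma maxEl_mem (h : I.Nonempty) : maxEl I ∈ I := by
  obtain ⟨e, he, heq⟩ := exists_mem_eq_sup I h id
  rwa [maxEl, heq]

lemma le_maxEl {i : ℕ} (hi : i ∈ I) : i ≤ maxEl I := le_sup (f := id) hi

lemma aI_mem_and_lt (hpos : ∀ i ∈ I, 0 < i) :
    aI D I ∈ insert 0 D ∧ ∀ i ∈ I, aI D I < i := by
  have h0 : 0 ∈ (insert 0 D).filter fun e => ∀ i ∈ I, e < i :=
    mem_filter.mpr ⟨mem_insert_self _ _, hpos⟩
  obtain ⟨e, he, heq⟩ := exists_mem_eq_sup _ ⟨0, h0⟩ id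
  rw [aI, heq]
  exact mem_filter.mp he

lemma le_aI {e : ℕ} (he : e ∈ insert 0 D) (h : ∀ i ∈ I, e < i) : e ≤ aI D I :=
  le_sup (f := id) (mem_filter.mpr ⟨he, h⟩)

lemma bI_mem_and_gt (hle : ∀ i ∈ I, i ≤ n) :
    bI n D I ∈ insert (n + 1) D ∧ ∀ i ∈ I, i < bI n D I :=
  Nat.sInf_mem (s := {e | e ∈ insert (n + 1) D ∧ ∀ i ∈ I, i < e})
    ⟨n + 1, mem_insert_self _ _, fun i hi => Nat.lt_succ_of_le (hle i hi)⟩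

lemma bI_le {e : ℕ} (he : e ∈ insert (n + 1) D) (h : ∀ i ∈ I, i < e) : bI n D I ≤ e :=
  Nat.sInf_le ⟨he, h⟩

end Extremes

section Diagonals

variable {n : ℕ} {D U : Finset ℕ} {x y : ℕ}

lemma insert_zero_subset_Dbar : insert 0 D ⊆ Dbar n D :=
  insert_subset_insert _ (subset_insert _ _)

lemma insert_succ_subset_Dbar : insert (n + 1) D ⊆ Dbar n D := subset_insert _ _

lemma subset_Dbar : D ⊆ Dbar n D := (subset_insert _ _).trans insert_succ_subset_Dbar

lemma not_isProper_of_consecIn (h : ConsecIn (Dbar n D) x y) : ¬ IsProper n D U x y :=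
  fun hp => hp.2.2 (Or.inl h)

lemma isProper_of_notMem_of_mem_between {d : ℕ} (hx : x ∉ U) (hy : y ∉ U) (hyn : y ≤ n + 1)
    (hd : d ∈ D) (hxd : x < d) (hdy : d < y) (houter : ¬ (U = ∅ ∧ x = 0 ∧ y = n + 1)) :
    IsProper n D U x y := by
  refine ⟨hxd.trans hdy, hyn, ?_⟩
  rintro (⟨-, -, -, hc⟩ | ⟨-, ⟨-, hyU, -⟩ | ⟨-, hxU, -⟩ | ⟨hxU, -⟩⟩ | h)
  exacts [hc d (subset_Dbar hd) ⟨hxd, hdy⟩, hy hyU, hx hxU, hx hxU, houter h]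

lemma isProper_of_mem_left (hx : x ∈ U) (hxD : x ∉ Dbar n D) (hy : y ∉ U) (hxy : x < y)
    (hyn : y ≤ n) : IsProper n D U x y := by
  refine ⟨hxy, by omega, ?_⟩
  rintro (⟨hxD', -⟩ | ⟨-, ⟨rfl, -⟩ | ⟨rfl, -⟩ | ⟨-, hyU, -⟩⟩ | ⟨rfl, -⟩)
  exacts [hxD hxD', hxD (mem_insert_self _ _), by omega, hy hyU, notMem_empty x hx]

lemma isProper_of_mem_right (hy : y ∈ U) (hyD : y ∉ Dbar n D) (hx : x ∉ U) (hx0 : x ≠ 0)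
    (hxy : x < y) (hyn : y ≤ n + 1) : IsProper n D U x y := by
  refine ⟨hxy, hyn, ?_⟩
  rintro (⟨-, hyD', -⟩ | ⟨-, ⟨rfl, -⟩ | ⟨-, hxU, -⟩ | ⟨hxU, -⟩⟩ | ⟨rfl, -⟩)
  exacts [hyD hyD', hx0 rfl, hx hxU, hx hxU, notMem_empty y hy]

end Diagonals

section Nested

variable {n : ℕ} {D U I : Finset ℕ}

lemma bI_le_succ (hle : ∀ i ∈ I, i ≤ n) : bI n D I ≤ n + 1 :=
  bI_le (mem_insert_self _ _) fun i hi => Nat.lt_succ_of_le (hle i hi)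

lemma notMem_Dbar_of_mem (hDU : D ∪ U = Icc 1 n) (hdisj : Disjoint D U) {u : ℕ} (hu : u ∈ U) :
    u ∉ Dbar n D := by
  have hu' := mem_Icc.mp (hDU ▸ mem_union_right D hu)
  simp only [Dbar, mem_insert]
  rintro (rfl | rfl | hD)
  · omega
  · omega
  · exact disjoint_left.mp hdisj hD hu

lemma aI_notMem (hDU : D ∪ U = Icc 1 n) (hdisj : Disjoint D U) (hpos : ∀ i ∈ I, 0 < i) :
    aI D I ∉ U := fun hu =>
  notMem_Dbar_of_mem hDU hdisj hu (insert_zero_subset_Dbar (aI_mem_and_lt hpos).1)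

lemma bI_notMem (hDU : D ∪ U = Icc 1 n) (hdisj : Disjoint D U) (hle : ∀ i ∈ I, i ≤ n) :
    bI n D I ∉ U := fun hu =>
  notMem_Dbar_of_mem hDU hdisj hu (insert_succ_subset_Dbar (bI_mem_and_gt hle).1)

lemma consecIn_aI_minEl (hI : I ⊆ Icc 1 n) (hne : I.Nonempty) (hγ : minEl I ∈ D) :
    ConsecIn (Dbar n D) (aI D I) (minEl I) := by
  have hγI := minEl_mem hne
  have hγn := (mem_Icc.mp (hI hγI)).2
  obtain ⟨ha, hlt⟩ := aI_mem_and_lt (D := D) fun i hi => (mem_Icc.mp (hI hi)).1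
  refine ⟨insert_zero_subset_Dbar ha, subset_Dbar hγ, hlt _ hγI, ?_⟩
  simp only [Dbar, mem_insert]
  rintro z (rfl | rfl | hz) ⟨haz, hzγ⟩
  · omega
  · omega
  · exact (le_aI (mem_insert_of_mem hz) fun i hi => hzγ.trans_le (minEl_le hi)).not_gt haz

lemma consecIn_maxEl_bI (hI : I ⊆ Icc 1 n) (hne : I.Nonempty) (hΓ : maxEl I ∈ D) :
    ConsecIn (Dbar n D) (maxEl I) (bI n D I) := by
  have hΓI := maxEl_mem hne
  have hle : ∀ i ∈ I, i ≤ n := fun i hi => (mem_Icc.mp (hI hi)).2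
  have hbn := bI_le_succ (D := D) hle
  obtain ⟨hb, hgt⟩ := bI_mem_and_gt (D := D) hle
  refine ⟨subset_Dbar hΓ, insert_succ_subset_Dbar hb, hgt _ hΓI, ?_⟩
  simp only [Dbar, mem_insert]
  rintro z (rfl | rfl | hz) ⟨hΓz, hzb⟩
  · omega
  · omega
  · exact (bI_le (mem_insert_of_mem hz) fun i hi => (le_maxEl hi).trans_lt hΓz).not_gt hzb

lemma not_eq_empty_and_aI_eq_zero_and_bI_eq_succ (hDU : D ∪ U = Icc 1 n)
    (hnested : IsNested n D I) (hproper : I ≠ Icc 1 n) :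
    ¬ (U = ∅ ∧ aI D I = 0 ∧ bI n D I = n + 1) := by
  rintro ⟨rfl, ha, hb⟩
  rw [union_empty] at hDU
  refine hproper (hnested.2.1.antisymm fun d hd => hnested.2.2 d (hDU ▸ hd) ?_ ?_)
  · rw [ha]; exact (mem_Icc.mp hd).1
  · rw [hb]; exact Nat.lt_succ_of_le (mem_Icc.mp hd).2

lemma isProper_aI_bI (hDU : D ∪ U = Icc 1 n) (hdisj : Disjoint D U) (hnested : IsNested n D I)
    (hproper : I ≠ Icc 1 n) {d : ℕ} (hd : d ∈ D) (hdI : d ∈ I) :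
    IsProper n D U (aI D I) (bI n D I) := by
  have hpos : ∀ i ∈ I, 0 < i := fun i hi => (mem_Icc.mp (hnested.2.1 hi)).1
  have hle : ∀ i ∈ I, i ≤ n := fun i hi => (mem_Icc.mp (hnested.2.1 hi)).2
  exact isProper_of_notMem_of_mem_between (aI_notMem hDU hdisj hpos)
    (bI_notMem hDU hdisj hle) (bI_le_succ hle) hd ((aI_mem_and_lt hpos).2 d hdI)
    ((bI_mem_and_gt hle).2 d hdI)
    (not_eq_empty_and_aI_eq_zero_and_bI_eq_succ hDU hnested hproper)

lemma isProper_aI_maxEl_iff_minEl_bI_of_mem_D (hDU : D ∪ U = Icc 1 n) (hdisj : Disjoint D U)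
    (hI : I ⊆ Icc 1 n) (hne : I.Nonempty) (hγ : minEl I ∈ D) (hΓ : maxEl I ∈ D) :
    IsProper n D U (aI D I) (maxEl I) ↔ IsProper n D U (minEl I) (bI n D I) := by
  have hpos : ∀ i ∈ I, 0 < i := fun i hi => (mem_Icc.mp (hI hi)).1
  have hle : ∀ i ∈ I, i ≤ n := fun i hi => (mem_Icc.mp (hI hi)).2
  rcases (minEl_le (maxEl_mem hne)).eq_or_lt with heq | hlt
  · have hleft := consecIn_aI_minEl hI hne hγ
    have hright := consecIn_maxEl_bI hI hne hΓ
    rw [heq] at hleft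
    rw [← heq] at hright
    exact iff_of_false (not_isProper_of_consecIn hleft) (not_isProper_of_consecIn hright)
  · have hΓn := hle _ (maxEl_mem hne)
    have hγ0 := hpos _ (minEl_mem hne)
    refine iff_of_true ?_ ?_
    · exact isProper_of_notMem_of_mem_between (aI_notMem hDU hdisj hpos)
        (disjoint_left.mp hdisj hΓ) (by omega) hγ ((aI_mem_and_lt hpos).2 _ (minEl_mem hne))
        hlt (by omega)
    · exact isProper_of_notMem_of_mem_between (disjoint_left.mp hdisj hγ)
        (bI_notMem hDU hdisj hle) (bI_le_succ hle) hΓ hlt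
        ((bI_mem_and_gt hle).2 _ (maxEl_mem hne)) (by omega)

lemma isProper_minEl_maxEl_of_mem_D_mem_U (hDU : D ∪ U = Icc 1 n) (hdisj : Disjoint D U)
    (hI : I ⊆ Icc 1 n) (hne : I.Nonempty) (hγ : minEl I ∈ D) (hΓ : maxEl I ∈ U) :
    IsProper n D U (minEl I) (maxEl I) := by
  have hγ0 := (mem_Icc.mp (hI (minEl_mem hne))).1
  have hΓn := (mem_Icc.mp (hI (maxEl_mem hne))).2
  have hγΓ : minEl I ≠ maxEl I := fun h => disjoint_left.mp hdisj hγ (h ▸ hΓ)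
  exact isProper_of_mem_right hΓ (notMem_Dbar_of_mem hDU hdisj hΓ) (disjoint_left.mp hdisj hγ)
    (by omega) ((minEl_le (maxEl_mem hne)).lt_of_ne hγΓ) (by omega)

lemma isProper_minEl_maxEl_of_mem_U_mem_D (hDU : D ∪ U = Icc 1 n) (hdisj : Disjoint D U)
    (hI : I ⊆ Icc 1 n) (hne : I.Nonempty) (hγ : minEl I ∈ U) (hΓ : maxEl I ∈ D) :
    IsProper n D U (minEl I) (maxEl I) := by
  have hΓn := (mem_Icc.mp (hI (maxEl_mem hne))).2
  have hγΓ : minEl I ≠ maxEl I := fun h => disjoint_left.mp hdisj hΓ (h ▸ hγ)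
  exact isProper_of_mem_left hγ (notMem_Dbar_of_mem hDU hdisj hγ) (disjoint_left.mp hdisj hΓ)
    ((minEl_le (maxEl_mem hne)).lt_of_ne hγΓ) hΓn

lemma isProper_aI_maxEl_and_minEl_bI_of_mem_U (hDU : D ∪ U = Icc 1 n) (hdisj : Disjoint D U)
    (h1D : 1 ∈ D) (hnD : n ∈ D) (hI : I ⊆ Icc 1 n) (hne : I.Nonempty)
    (hγ : minEl I ∈ U) (hΓ : maxEl I ∈ U) :
    IsProper n D U (aI D I) (maxEl I) ∧ IsProper n D U (minEl I) (bI n D I) := by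
  have hpos : ∀ i ∈ I, 0 < i := fun i hi => (mem_Icc.mp (hI hi)).1
  have hle : ∀ i ∈ I, i ≤ n := fun i hi => (mem_Icc.mp (hI hi)).2
  have hγ1 : minEl I ≠ 1 := fun h => disjoint_left.mp hdisj h1D (h ▸ hγ)
  have hΓn : maxEl I ≠ n := fun h => disjoint_left.mp hdisj hnD (h ▸ hΓ)
  have hγ0 := hpos _ (minEl_mem hne)
  have hΓle := hle _ (maxEl_mem hne)
  have hγΓ := minEl_le (maxEl_mem hne)
  have hγa := (aI_mem_and_lt (D := D) hpos).2 _ (minEl_mem hne)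
  have hΓb := (bI_mem_and_gt (D := D) hle).2 _ (maxEl_mem hne)
  have ha1 : 1 ≤ aI D I :=
    le_aI (mem_insert_of_mem h1D) fun i hi => (by omega : 1 < minEl I).trans_le (minEl_le hi)
  have hbn : bI n D I ≤ n :=
    bI_le (mem_insert_of_mem hnD) fun i hi => (le_maxEl hi).trans_lt (by omega)
  exact ⟨isProper_of_mem_right hΓ (notMem_Dbar_of_mem hDU hdisj hΓ)
      (aI_notMem hDU hdisj hpos) (by omega) (by omega) (by omega),
    isProper_of_mem_left hγ (notMem_Dbar_of_mem hDU hdisj hγ) (bI_notMem hDU hdisj hle)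
      (by omega) hbn⟩

lemma isProper_pattern (hDU : D ∪ U = Icc 1 n) (hdisj : Disjoint D U) (h1D : 1 ∈ D)
    (hnD : n ∈ D) (hnested : IsNested n D I) (hproper : I ≠ Icc 1 n) :
    (IsProper n D U (aI D I) (bI n D I) ∧
        (IsProper n D U (aI D I) (maxEl I) ↔ IsProper n D U (minEl I) (bI n D I))) ∨
      (IsProper n D U (aI D I) (bI n D I) ∧ IsProper n D U (minEl I) (maxEl I)) ∨
      (IsProper n D U (aI D I) (maxEl I) ∧ IsProper n D U (minEl I) (bI n D I)) := by
  have hne := hnested.1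
  have hI := hnested.2.1
  have hDorU : ∀ i ∈ I, i ∈ D ∨ i ∈ U := fun i hi => mem_union.mp (hDU ▸ hI hi)
  rcases hDorU _ (minEl_mem hne) with hγ | hγ <;> rcases hDorU _ (maxEl_mem hne) with hΓ | hΓ
  · exact .inl ⟨isProper_aI_bI hDU hdisj hnested hproper hγ (minEl_mem hne),
      isProper_aI_maxEl_iff_minEl_bI_of_mem_D hDU hdisj hI hne hγ hΓ⟩
  · exact .inr (.inl ⟨isProper_aI_bI hDU hdisj hnested hproper hγ (minEl_mem hne),
      isProper_minEl_maxEl_of_mem_D_mem_U hDU hdisj hI hne hγ hΓ⟩)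
  · exact .inr (.inl ⟨isProper_aI_bI hDU hdisj hnested hproper hΓ (maxEl_mem hne),
      isProper_minEl_maxEl_of_mem_U_mem_D hDU hdisj hI hne hγ hΓ⟩)
  · exact .inr (.inr (isProper_aI_maxEl_and_minEl_bI_of_mem_U hDU hdisj h1D hnD hI hne hγ hΓ))

end Nested

lemma ne_of_mem_iff_of_pattern {S : Finset ℕ} {p₁ p₂ p₃ p₄ : Prop}
    (hS : ∀ i : ℕ, i ∈ S ↔ (i = 1 ∧ p₁) ∨ (i = 2 ∧ p₂) ∨ (i = 3 ∧ p₃) ∨ (i = 4 ∧ p₄))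
    (h : (p₁ ∧ (p₂ ↔ p₃)) ∨ (p₁ ∧ p₄) ∨ (p₂ ∧ p₃)) :
    S ≠ ∅ ∧ S ≠ {2} ∧ S ≠ {3} ∧ S ≠ {4} ∧
      S ≠ {1, 2} ∧ S ≠ {1, 3} ∧ S ≠ {2, 4} ∧ S ≠ {3, 4} := by
  have h₁ : 1 ∈ S ↔ p₁ := by simp [hS]
  have h₂ : 2 ∈ S ↔ p₂ := by simp [hS]
  have h₃ : 3 ∈ S ↔ p₃ := by simp [hS]
  have h₄ : 4 ∈ S ↔ p₄ := by simp [hS]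
  rw [← h₁, ← h₂, ← h₃, ← h₄] at h
  refine ⟨?_, ?_, ?_, ?_, ?_, ?_, ?_, ?_⟩ <;> rintro rfl <;> simp at h

theorem statement9_general (n : ℕ) (D U : Finset ℕ)
    (hDU : D ∪ U = Finset.Icc 1 n) (hdisj : Disjoint D U) (h1D : 1 ∈ D) (hnD : n ∈ D)
    (I : Finset ℕ)
    (hpropersub : I ≠ Finset.Icc 1 n) (hnested : IsNested n D I)
    (S : Finset ℕ)
    (hS : ∀ i : ℕ, i ∈ S ↔
        ((i = 1 ∧ IsProper n D U (aI D I) (bI n D I)) ∨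
         (i = 2 ∧ IsProper n D U (aI D I) (maxEl I)) ∨
         (i = 3 ∧ IsProper n D U (minEl I) (bI n D I)) ∨
         (i = 4 ∧ IsProper n D U (minEl I) (maxEl I)))) :
    S ≠ ∅ ∧ S ≠ {2} ∧ S ≠ {3} ∧ S ≠ {4} ∧
      S ≠ {1, 2} ∧ S ≠ {1, 3} ∧ S ≠ {2, 4} ∧ S ≠ {3, 4} :=
  ne_of_mem_iff_of_pattern hS (isProper_pattern hDU hdisj h1D hnD hnested hpropersub)

/-- for `n ≥ 3` and a nonempty proper nested `I ⊆ [n]`, the set `S` of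
indices `i ∈ {1,2,3,4}` with `δ_i` proper is never `∅`, `{2}`, `{3}`, `{4}`,
`{1,2}`, `{1,3}`, `{2,4}` or `{3,4}`. -/
theorem statement9 (n : ℕ) (D U : Finset ℕ) (hn : 3 ≤ n)
    (hDU : D ∪ U = Finset.Icc 1 n) (hdisj : Disjoint D U) (h1D : 1 ∈ D) (hnD : n ∈ D)
    (I : Finset ℕ) (hne : I.Nonempty) (hsub : I ⊆ Finset.Icc 1 n)
    (hpropersub : I ≠ Finset.Icc 1 n) (hnested : IsNested n D I)
    (S : Finset ℕ)
    (hS : ∀ i : ℕ, i ∈ S ↔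
        ((i = 1 ∧ IsProper n D U (aI D I) (bI n D I)) ∨
         (i = 2 ∧ IsProper n D U (aI D I) (maxEl I)) ∨
         (i = 3 ∧ IsProper n D U (minEl I) (bI n D I)) ∨
         (i = 4 ∧ IsProper n D U (minEl I) (maxEl I)))) :
    S ≠ ∅ ∧ S ≠ {2} ∧ S ≠ {3} ∧ S ≠ {4} ∧
      S ≠ {1, 2} ∧ S ≠ {1, 3} ∧ S ≠ {2, 4} ∧ S ≠ {3, 4} :=
  statement9_general n D U hDU hdisj h1D hnD I hpropersub hnested S hS

end AssocPaper
end

section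
/- Let I be a nonempty proper subset of [n] whose up and down interval decomposition has v(I) > 1 nested components. Then the Minkowski coefficient satisfies y_I = 0 (for any choice of the real values w_δ and z_{[n]}). -/
open Finset

attribute [local instance] Classical.propDecidable

/-! Since `v(I) > 1`, `I` is not nested, so some `d ∈ D ∖ I` lies strictly between `a(I)` and
`b(I)`, and `I` has elements on both sides of `d`. A nested set avoiding `d ∈ D` lies entirely
on one side of `d`, so for every `J ⊆ I` the nested components of `J` are those of `J_{<d}`
together with those of `J_{>d}`, and `z^c_J = z^c_{J_{<d}} + z^c_{J_{>d}}`. Each summand is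
unchanged when an element of `I` from the other side is added to `J`, and the alternating sum
over `J ⊆ I` of such a function vanishes. -/

theorem Finset.sum_powerset_neg_one_pow_card_sdiff_mul_eq_zero {α R : Type*} [DecidableEq α]
    [CommRing R] {I : Finset α} {i : α} (hi : i ∈ I) {f : Finset α → R}
    (hf : ∀ J ⊆ I.erase i, f (insert i J) = f J) :
    ∑ J ∈ I.powerset, (-1 : R) ^ (I \ J).card * f J = 0 := by
  rw [← insert_erase hi, sum_powerset_insert (notMem_erase i I), ← sum_add_distrib]
  refine sum_eq_zero fun J hJ => ?_
  have hiJ : i ∉ J := fun h => notMem_erase i I (mem_powerset.mp hJ h)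
  rw [insert_sdiff_insert, sdiff_insert_of_notMem (notMem_erase i I), hf J (mem_powerset.mp hJ),
    insert_sdiff_of_notMem _ hiJ,
    card_insert_of_notMem fun h => notMem_erase i I (mem_sdiff.mp h).1, pow_succ]
  ring

theorem Finset.sum_powerset_neg_one_pow_card_sdiff_mul_filter_eq_zero {α R : Type*}
    [DecidableEq α] [CommRing R] {I : Finset α} {i : α} (hi : i ∈ I) {p : α → Prop}
    [DecidablePred p] (hpi : ¬ p i) (g : Finset α → R) :
    ∑ J ∈ I.powerset, (-1 : R) ^ (I \ J).card * g (J.filter p) = 0 :=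
  sum_powerset_neg_one_pow_card_sdiff_mul_eq_zero hi fun J _ => by
    rw [filter_insert, if_neg hpi]

namespace AssocPaper

variable {n : ℕ} {D I J K : Finset ℕ}

theorem aI_lt_of_mem (hI : I ⊆ Icc 1 n) {i : ℕ} (hi : i ∈ I) : aI D I < i := by
  have hi0 : 0 < i := (mem_Icc.mp (hI hi)).1
  refine (Finset.sup_lt_iff hi0).mpr fun e he => ?_
  exact (mem_filter.mp he).2 i hi

theorem lt_bI_of_mem (hI : I ⊆ Icc 1 n) {i : ℕ} (hi : i ∈ I) : i < bI n D I := by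
  have hne : {e : ℕ | e ∈ insert (n + 1) D ∧ ∀ i ∈ I, i < e}.Nonempty :=
    ⟨n + 1, mem_insert_self _ _, fun j hj => Nat.lt_succ_of_le (mem_Icc.mp (hI hj)).2⟩
  exact (Nat.sInf_mem hne).2 i hi

theorem exists_mem_lt_of_lt_aI {d : ℕ} (hd : d ∈ D) (hdI : d ∉ I) (had : aI D I < d) :
    ∃ i ∈ I, i < d := by
  by_contra! h
  have hle : d ≤ aI D I :=
    le_sup (f := id) (mem_filter.mpr ⟨mem_insert_of_mem hd,
      fun i hi => (h i hi).lt_of_ne fun hdi => hdI (hdi ▸ hi)⟩)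
  omega

theorem exists_mem_gt_of_bI_lt {d : ℕ} (hd : d ∈ D) (hdI : d ∉ I) (hdb : d < bI n D I) :
    ∃ i ∈ I, d < i := by
  by_contra! h
  have hle : bI n D I ≤ d :=
    Nat.sInf_le ⟨mem_insert_of_mem hd,
      fun i hi => (h i hi).lt_of_ne fun hid => hdI (hid ▸ hi)⟩
  omega

theorem IsNested.forall_lt_or_forall_not_lt (hK : IsNested n D K) {d : ℕ} (hd : d ∈ D)
    (hdK : d ∉ K) : (∀ k ∈ K, k < d) ∨ ∀ k ∈ K, ¬ k < d := by
  by_contra! h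
  obtain ⟨⟨k₁, hk₁, hdk₁⟩, k₂, hk₂, hk₂d⟩ := h
  have hdk₁ : d < k₁ := hdk₁.lt_of_ne fun h => hdK (h ▸ hk₁)
  exact hdK (hK.2.2 d hd ((aI_lt_of_mem hK.2.1 hk₂).trans hk₂d)
    (hdk₁.trans (lt_bI_of_mem hK.2.1 hk₁)))

theorem mem_nestedComponents :
    K ∈ nestedComponents n D I ↔
      K ⊆ I ∧ IsNested n D K ∧ ∀ K' ⊆ I, IsNested n D K' → K ⊆ K' → K = K' := by
  simp only [nestedComponents, mem_filter, mem_powerset]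

theorem nestedComponents_eq_singleton (hI : IsNested n D I) : nestedComponents n D I = {I} := by
  ext K
  rw [mem_nestedComponents, mem_singleton]
  constructor
  · rintro ⟨hKI, -, hmax⟩
    exact hmax I subset_rfl hI hKI
  · rintro rfl
    exact ⟨subset_rfl, hI, fun K' hK' _ hKK' => subset_antisymm hKK' hK'⟩

section Split

variable {p : ℕ → Prop} [DecidablePred p]
  (hp : ∀ K ⊆ J, IsNested n D K → (∀ k ∈ K, p k) ∨ ∀ k ∈ K, ¬ p k)
include hp

theorem nestedComponents_filter :
    nestedComponents n D (J.filter p) = (nestedComponents n D J).filter (∀ k ∈ ·, p k) := by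
  ext K
  simp only [mem_filter, mem_nestedComponents, subset_iff]
  constructor
  · rintro ⟨hKJ, hK, hmax⟩
    obtain ⟨k, hk⟩ := hK.1
    refine ⟨⟨fun x hx => (hKJ hx).1, hK, fun K' hK'J hK' hKK' => hmax K' ?_ hK' hKK'⟩,
      fun x hx => (hKJ hx).2⟩
    rcases hp K' hK'J hK' with hpK' | hpK'
    · exact fun x hx => ⟨hK'J hx, hpK' x hx⟩
    · exact absurd (hKJ hk).2 (hpK' k (hKK' hk))
  · rintro ⟨⟨hKJ, hK, hmax⟩, hpK⟩
    exact ⟨fun x hx => ⟨hKJ hx, hpK x hx⟩, hK,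
      fun K' hK' => hmax K' fun x hx => (hK' hx).1⟩

theorem zc_eq_zc_filter_add_zc_filter_not (U : Finset ℕ) (w : ℕ × ℕ → ℝ) (zn : ℝ) :
    zc n D U w zn J = zc n D U w zn (J.filter p) + zc n D U w zn (J.filter (¬ p ·)) := by
  have hnp : ∀ K ⊆ J, IsNested n D K → (∀ k ∈ K, ¬ p k) ∨ ∀ k ∈ K, ¬ ¬ p k := by
    simpa only [not_not, or_comm] using hp
  unfold zc
  rw [nestedComponents_filter hp, nestedComponents_filter hnp,
    ← sum_filter_add_sum_filter_not (nestedComponents n D J) (∀ k ∈ ·, p k)]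
  congr 1
  refine sum_congr (filter_congr fun K hK => ?_) fun _ _ => rfl
  obtain ⟨hKJ, hK, -⟩ := mem_nestedComponents.mp hK
  obtain ⟨k, hk⟩ := hK.1
  rcases hp K hKJ hK with hpK | hpK
  · exact iff_of_false (not_not.mpr hpK) fun h => h k hk (hpK k hk)
  · exact iff_of_true (fun h => hpK k hk (h k hk)) hpK

end Split

theorem statement12_general (n : ℕ) (D U : Finset ℕ)
    (w : ℕ × ℕ → ℝ) (zn : ℝ)
    (I : Finset ℕ) (hne : I.Nonempty) (hsub : I ⊆ Finset.Icc 1 n)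
    (hv : 1 < vI n D I) :
    yI n D U w zn I = 0 := by
  have hI : ¬ IsNested n D I := fun hI => by
    rw [vI, nestedComponents_eq_singleton hI, card_singleton] at hv
    exact lt_irrefl 1 hv
  obtain ⟨d, hd, had, hdb, hdI⟩ : ∃ d ∈ D, aI D I < d ∧ d < bI n D I ∧ d ∉ I := by
    by_contra! h
    exact hI ⟨hne, hsub, h⟩
  obtain ⟨a, haI, had⟩ := exists_mem_lt_of_lt_aI hd hdI had
  obtain ⟨b, hbI, hdb⟩ := exists_mem_gt_of_bI_lt hd hdI hdb
  have hsplit : ∀ J ∈ I.powerset, zc n D U w zn J =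
      zc n D U w zn (J.filter (· < d)) + zc n D U w zn (J.filter (¬ · < d)) :=
    fun J hJ => zc_eq_zc_filter_add_zc_filter_not (fun K hKJ hK =>
      hK.forall_lt_or_forall_not_lt hd fun hdK => hdI (mem_powerset.mp hJ (hKJ hdK))) U w zn
  rw [yI, sum_congr rfl fun J hJ => by rw [hsplit J hJ, mul_add], sum_add_distrib,
    sum_powerset_neg_one_pow_card_sdiff_mul_filter_eq_zero hbI hdb.not_gt,
    sum_powerset_neg_one_pow_card_sdiff_mul_filter_eq_zero haI (not_not.mpr had), add_zero]

/-- if the nonempty proper subset `I` of `[n]` has more than one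
nested component, then `y_I = 0`, for any right-hand sides `w` and `z_{[n]}`. -/
theorem statement12 (n : ℕ) (D U : Finset ℕ) (hn : 2 ≤ n)
    (hDU : D ∪ U = Finset.Icc 1 n) (hdisj : Disjoint D U) (h1D : 1 ∈ D) (hnD : n ∈ D)
    (w : ℕ × ℕ → ℝ) (zn : ℝ)
    (I : Finset ℕ) (hne : I.Nonempty) (hsub : I ⊆ Finset.Icc 1 n)
    (hpropersub : I ≠ Finset.Icc 1 n)
    (hv : 1 < vI n D I) :
    yI n D U w zn I = 0 :=
  statement12_general n D U w zn I hne hsub hv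

end AssocPaper
end
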